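/- Let (μ, (c_k)) be scalar Gårding–Wightman data on X with associated operators J_k, J'_k on L²(X, μ; ℂ). Assume μ̃, the pushforward of μ under x ↦ 1−x, is mutually absolutely continuous with μ, and that there is a measurable ρ : X → ℂ with |ρ(x)| = 1 for μ-a.e. x satisfying ρ(x)·conj(ρ(1−x)) = 1 for μ-a.e. x and, for every k ≥ 1, ρ(x)·conj(c_k(1−x)) = (−1)^k · c_k(x) · ρ(x+δ_k) for μ-a.e. x. Then the map S defined by (Sf)(x) = ρ(x) · √((dμ̃/dμ)(x)) · conj(f(1−x)) is a well-defined norm-preserving, additive, conjugate-homogeneous involution of L²(X, μ; ℂ) that commutes with every J_k and every J'_k. -/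

import Mathlib

/-!
Common setup: `GWX` is the compact abelian group `X = ∏_{k ≥ 1} {0,1}` of 0-1 sequences
(with componentwise addition mod 2 and the product σ-algebra, which is generated by the
sets `X_k = {x : x_k = 1}`).  The coordinate `i : ℕ` of `x : GWX` represents the paper's
coordinate `x_{i+1}`, so the Lean index `k : ℕ` corresponds to the paper's index `k + 1`
throughout; in particular the paper's sign `(-1)^k` becomes `(-1)^(k+1)` here.
-/

open MeasureTheory Complex Filter
open scoped ENNReal

noncomputable section

abbrev GWX : Type := ℕ → ZMod 2

/-- `δ_k`: the sequence with `1` in the `k`-th place (the paper's `(k+1)`-th place)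
and `0` elsewhere. -/
def gwDelta (k : ℕ) : GWX := fun i => if i = k then 1 else 0

/-- The componentwise complement `x ↦ 1 - x`. -/
def gwFlip (x : GWX) : GWX := fun i => 1 - x i

/-- The sign `(-1)^{x_1 + ⋯ + x_{k-1} + 1}` of the paper, for the paper's index `k + 1`. -/
def gwSign (k : ℕ) (x : GWX) : ℂ := (-1 : ℂ) ^ ((∑ i ∈ Finset.range k, (x i).val) + 1)

/-!
Write `T g = ρ · √(dμ̃/dμ) · conj (g ∘ flip)`. Because the flip is a quasi-invariant involution,
`∫ (dμ̃/dμ) · φ ∘ flip dμ = ∫ φ dμ`, so `T` preserves the `L²` norm. For two commuting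
quasi-invariant involutions `e, s` the Radon–Nikodym derivatives `D_e, D_s` of the pushforwards
satisfy the chain rule `D_e · D_s ∘ e = D_{e ∘ s} = D_s · D_e ∘ s`; for `s = e` this gives
`D_e · D_e ∘ e = 1`. Hence `T² = 1` reduces to `ρ · conj (ρ ∘ flip) = 1`, and `T` commutes with the
weighted shift `J_k` as soon as `ρ · conj (a_k ∘ flip) = a_k · ρ ∘ shift_k` for its
coefficient `a_k = gwSign k · i · c_k`; since `gwSign k ∘ flip = (-1)^k gwSign k`, this is the
hypothesis on `ρ`.
The extra factor `(-1)^{x_k} i` of `J'_k` is fixed by conjugation composed with the flip.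
-/

open ComplexConjugate MeasureTheory.Measure

section Involution

variable {α : Type*} [MeasurableSpace α] {μ : Measure α} {e s : α → α}

lemma map_withDensity_of_involutive (he : Measurable e) (he_inv : Function.Involutive e)
    {f : α → ℝ≥0∞} (hf : Measurable f) :
    (μ.withDensity f).map e = (μ.map e).withDensity (f ∘ e) := by
  ext t ht
  rw [Measure.map_apply he ht, withDensity_apply _ (he ht), withDensity_apply _ ht,
    setLIntegral_map ht (hf.comp he) he]
  refine setLIntegral_congr_fun (he ht) fun x _ => ?_
  simp [he_inv x]

lemma withDensity_rnDeriv_map_mul_comp [SigmaFinite μ]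
    (he : QuasiMeasurePreserving e μ μ) (he_inv : Function.Involutive e)
    (hs : QuasiMeasurePreserving s μ μ) :
    μ.withDensity (fun x => (μ.map e).rnDeriv μ x * (μ.map s).rnDeriv μ (e x)) =
      μ.map (e ∘ s) := by
  have hDs := measurable_rnDeriv (μ.map s) μ
  rw [show (fun x => (μ.map e).rnDeriv μ x * (μ.map s).rnDeriv μ (e x)) =
      (μ.map e).rnDeriv μ * ((μ.map s).rnDeriv μ ∘ e) from rfl,
    withDensity_mul _ (measurable_rnDeriv _ _) (hDs.comp he.measurable),
    withDensity_rnDeriv_eq _ _ he.absolutelyContinuous,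
    ← map_withDensity_of_involutive he.measurable he_inv hDs,
    withDensity_rnDeriv_eq _ _ hs.absolutelyContinuous,
    Measure.map_map he.measurable hs.measurable]

lemma rnDeriv_map_mul_comp_ae_eq [SigmaFinite μ]
    (he : QuasiMeasurePreserving e μ μ) (he_inv : Function.Involutive e)
    (hs : QuasiMeasurePreserving s μ μ) :
    (fun x => (μ.map e).rnDeriv μ x * (μ.map s).rnDeriv μ (e x)) =ᵐ[μ]
      (μ.map (e ∘ s)).rnDeriv μ := by
  have hD : Measurable fun x => (μ.map e).rnDeriv μ x * (μ.map s).rnDeriv μ (e x) :=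
    (measurable_rnDeriv _ _).mul ((measurable_rnDeriv _ _).comp he.measurable)
  have h := rnDeriv_withDensity μ hD
  rw [withDensity_rnDeriv_map_mul_comp he he_inv hs] at h
  exact h.symm

lemma rnDeriv_map_mul_rnDeriv_map_comp_self [SigmaFinite μ]
    (he : QuasiMeasurePreserving e μ μ) (he_inv : Function.Involutive e) :
    ∀ᵐ x ∂μ, (μ.map e).rnDeriv μ x * (μ.map e).rnDeriv μ (e x) = 1 := by
  filter_upwards [rnDeriv_map_mul_comp_ae_eq he he_inv he, Measure.rnDeriv_self μ]
    with x h h_self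
  rwa [he_inv.comp_self, Measure.map_id, h_self] at h

lemma rnDeriv_map_mul_rnDeriv_map_comp_comm [SigmaFinite μ]
    (he : QuasiMeasurePreserving e μ μ) (he_inv : Function.Involutive e)
    (hs : QuasiMeasurePreserving s μ μ) (hs_inv : Function.Involutive s)
    (hes : e ∘ s = s ∘ e) :
    ∀ᵐ x ∂μ, (μ.map e).rnDeriv μ x * (μ.map s).rnDeriv μ (e x) =
      (μ.map s).rnDeriv μ x * (μ.map e).rnDeriv μ (s x) := by
  filter_upwards [rnDeriv_map_mul_comp_ae_eq he he_inv hs,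
    rnDeriv_map_mul_comp_ae_eq hs hs_inv he] with x h₁ h₂
  rw [h₁, h₂, hes]

lemma lintegral_rnDeriv_map_mul_comp [SigmaFinite μ]
    (he : QuasiMeasurePreserving e μ μ) (he_inv : Function.Involutive e)
    {φ : α → ℝ≥0∞} (hφ : AEMeasurable φ μ) :
    ∫⁻ x, (μ.map e).rnDeriv μ x * φ (e x) ∂μ = ∫⁻ x, φ x ∂μ := by
  have hφe : AEMeasurable (fun x => φ (e x)) μ := hφ.comp_quasiMeasurePreserving he
  rw [lintegral_rnDeriv_mul he.absolutelyContinuous hφe,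
    lintegral_map' (hφe.mono_ac he.absolutelyContinuous) he.aemeasurable]
  simp only [he_inv _]

variable (μ) in
def sqrtRnDerivMap (e : α → α) (x : α) : ℂ := (Real.sqrt (((μ.map e).rnDeriv μ x).toReal) : ℂ)

lemma conj_sqrtRnDerivMap (x : α) : conj (sqrtRnDerivMap μ e x) = sqrtRnDerivMap μ e x :=
  Complex.conj_ofReal _

lemma sqrtRnDerivMap_mul_sqrtRnDerivMap (x y : α) :
    sqrtRnDerivMap μ e x * sqrtRnDerivMap μ s y =
      (Real.sqrt (((μ.map e).rnDeriv μ x * (μ.map s).rnDeriv μ y).toReal) : ℂ) := by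
  rw [sqrtRnDerivMap, sqrtRnDerivMap, ← Complex.ofReal_mul, ENNReal.toReal_mul,
    Real.sqrt_mul ENNReal.toReal_nonneg]

lemma sqrtRnDerivMap_mul_sqrtRnDerivMap_comp_self [SigmaFinite μ]
    (he : QuasiMeasurePreserving e μ μ) (he_inv : Function.Involutive e) :
    ∀ᵐ x ∂μ, sqrtRnDerivMap μ e x * sqrtRnDerivMap μ e (e x) = 1 := by
  filter_upwards [rnDeriv_map_mul_rnDeriv_map_comp_self he he_inv] with x h
  simp [sqrtRnDerivMap_mul_sqrtRnDerivMap, h]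

lemma sqrtRnDerivMap_mul_sqrtRnDerivMap_comp_comm [SigmaFinite μ]
    (he : QuasiMeasurePreserving e μ μ) (he_inv : Function.Involutive e)
    (hs : QuasiMeasurePreserving s μ μ) (hs_inv : Function.Involutive s)
    (hes : e ∘ s = s ∘ e) :
    ∀ᵐ x ∂μ, sqrtRnDerivMap μ e x * sqrtRnDerivMap μ s (e x) =
      sqrtRnDerivMap μ s x * sqrtRnDerivMap μ e (s x) := by
  filter_upwards [rnDeriv_map_mul_rnDeriv_map_comp_comm he he_inv hs hs_inv hes] with x h
  rw [sqrtRnDerivMap_mul_sqrtRnDerivMap, sqrtRnDerivMap_mul_sqrtRnDerivMap, h]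

lemma enorm_sqrtRnDerivMap_sq [SigmaFinite (μ.map e)] :
    ∀ᵐ x ∂μ, ‖sqrtRnDerivMap μ e x‖ₑ ^ 2 = (μ.map e).rnDeriv μ x := by
  filter_upwards [Measure.rnDeriv_lt_top (μ.map e) μ] with x hx
  rw [sqrtRnDerivMap, ← ofReal_norm, Complex.norm_real, Real.norm_of_nonneg (Real.sqrt_nonneg _),
    ← ENNReal.ofReal_pow (Real.sqrt_nonneg _), Real.sq_sqrt ENNReal.toReal_nonneg,
    ENNReal.ofReal_toReal hx.ne]

variable (μ) in
def twistedConj (e : α → α) (ρ g : α → ℂ) (x : α) : ℂ :=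
  ρ x * sqrtRnDerivMap μ e x * conj (g (e x))

variable (μ) in
def weightedComp (s : α → α) (a g : α → ℂ) (x : α) : ℂ :=
  a x * sqrtRnDerivMap μ s x * g (s x)

variable {ρ : α → ℂ}

lemma twistedConj_congr_ae (he : QuasiMeasurePreserving e μ μ) {g₁ g₂ : α → ℂ}
    (h : g₁ =ᵐ[μ] g₂) : twistedConj μ e ρ g₁ =ᵐ[μ] twistedConj μ e ρ g₂ := by
  filter_upwards [he.ae h] with x hx
  rw [twistedConj, twistedConj, hx]

lemma weightedComp_congr_ae (hs : QuasiMeasurePreserving s μ μ) {a g₁ g₂ : α → ℂ}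
    (h : g₁ =ᵐ[μ] g₂) : weightedComp μ s a g₁ =ᵐ[μ] weightedComp μ s a g₂ := by
  filter_upwards [hs.ae h] with x hx
  rw [weightedComp, weightedComp, hx]

lemma MeasureTheory.AEStronglyMeasurable.twistedConj {g : α → ℂ} (hg : AEStronglyMeasurable g μ)
    (he : QuasiMeasurePreserving e μ μ) (hρ : AEStronglyMeasurable ρ μ) :
    AEStronglyMeasurable (twistedConj μ e ρ g) μ := by
  refine (hρ.mul ?_).mul (Complex.continuous_conj.comp_aestronglyMeasurable
    (hg.comp_quasiMeasurePreserving he))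
  exact (Complex.measurable_ofReal.comp (Real.continuous_sqrt.measurable.comp
    (measurable_rnDeriv _ _).ennreal_toReal)).aestronglyMeasurable

lemma eLpNorm_twistedConj [SigmaFinite μ] (he : QuasiMeasurePreserving e μ μ)
    (he_inv : Function.Involutive e) (hρ : ∀ᵐ x ∂μ, ‖ρ x‖ = 1) {g : α → ℂ}
    (hg : AEStronglyMeasurable g μ) :
    eLpNorm (twistedConj μ e ρ g) 2 μ = eLpNorm g 2 μ := by
  have : SigmaFinite (μ.map e) := (MeasurableEquiv.ofInvolutive e he_inv he.1).sigmaFinite_map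
  have h_sq : (fun x => ‖twistedConj μ e ρ g x‖ₑ ^ 2) =ᵐ[μ]
      fun x => (μ.map e).rnDeriv μ x * ‖g (e x)‖ₑ ^ 2 := by
    filter_upwards [hρ, enorm_sqrtRnDerivMap_sq (e := e)] with x hρx hx
    rw [twistedConj, enorm_mul, enorm_mul, mul_pow, mul_pow, hx, ← ofReal_norm, hρx]
    simp
  simp only [eLpNorm_eq_lintegral_rpow_enorm_toReal two_ne_zero ENNReal.ofNat_ne_top,
    ENNReal.toReal_ofNat, ENNReal.rpow_two]
  rw [lintegral_congr_ae h_sq,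
    lintegral_rnDeriv_map_mul_comp he he_inv (φ := fun x => ‖g x‖ₑ ^ 2) (hg.enorm.pow_const 2)]

lemma twistedConj_add (g₁ g₂ : α → ℂ) :
    twistedConj μ e ρ (g₁ + g₂) = twistedConj μ e ρ g₁ + twistedConj μ e ρ g₂ := by
  ext x
  simp only [twistedConj, Pi.add_apply, map_add]
  ring

lemma twistedConj_smul (c : ℂ) (g : α → ℂ) :
    twistedConj μ e ρ (c • g) = conj c • twistedConj μ e ρ g := by
  ext x
  simp only [twistedConj, Pi.smul_apply, smul_eq_mul, map_mul]
  ring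

lemma twistedConj_mul_left (m g : α → ℂ) :
    twistedConj μ e ρ (fun x => m x * g x) = fun x => conj (m (e x)) * twistedConj μ e ρ g x := by
  ext x
  simp only [twistedConj, map_mul]
  ring

lemma twistedConj_twistedConj [SigmaFinite μ] (he : QuasiMeasurePreserving e μ μ)
    (he_inv : Function.Involutive e) (hρ : ∀ᵐ x ∂μ, ρ x * conj (ρ (e x)) = 1) (g : α → ℂ) :
    twistedConj μ e ρ (twistedConj μ e ρ g) =ᵐ[μ] g := by
  filter_upwards [hρ, sqrtRnDerivMap_mul_sqrtRnDerivMap_comp_self he he_inv] with x hρx hx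
  simp only [twistedConj, map_mul, conj_conj, conj_sqrtRnDerivMap, he_inv x]
  linear_combination (sqrtRnDerivMap μ e x * sqrtRnDerivMap μ e (e x) * g x) * hρx + g x * hx

lemma twistedConj_weightedComp [SigmaFinite μ] (he : QuasiMeasurePreserving e μ μ)
    (he_inv : Function.Involutive e) (hs : QuasiMeasurePreserving s μ μ)
    (hs_inv : Function.Involutive s) (hes : e ∘ s = s ∘ e) {a : α → ℂ}
    (ha : ∀ᵐ x ∂μ, ρ x * conj (a (e x)) = a x * ρ (s x)) (g : α → ℂ) :
    twistedConj μ e ρ (weightedComp μ s a g) =ᵐ[μ] weightedComp μ s a (twistedConj μ e ρ g) := by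
  filter_upwards [ha, sqrtRnDerivMap_mul_sqrtRnDerivMap_comp_comm he he_inv hs hs_inv hes]
    with x hax hx
  simp only [twistedConj, weightedComp, map_mul, conj_sqrtRnDerivMap]
  rw [show e (s x) = s (e x) from congrFun hes x]
  linear_combination (sqrtRnDerivMap μ e x * sqrtRnDerivMap μ s (e x) * conj (g (s (e x)))) * hax
    + (a x * ρ (s x) * conj (g (s (e x)))) * hx

lemma memLp_twistedConj [SigmaFinite μ] (he : QuasiMeasurePreserving e μ μ)
    (he_inv : Function.Involutive e) (hρm : AEStronglyMeasurable ρ μ) (hρ : ∀ᵐ x ∂μ, ‖ρ x‖ = 1)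
    {g : α → ℂ} (hg : MemLp g 2 μ) : MemLp (twistedConj μ e ρ g) 2 μ :=
  ⟨hg.aestronglyMeasurable.twistedConj he hρm, by
    rw [eLpNorm_twistedConj he he_inv hρ hg.aestronglyMeasurable]; exact hg.2⟩

section Lp

variable [SigmaFinite μ] (he : QuasiMeasurePreserving e μ μ)
  (he_inv : Function.Involutive e) (hρm : AEStronglyMeasurable ρ μ) (hρ : ∀ᵐ x ∂μ, ‖ρ x‖ = 1)

def twistedConjLp : Lp ℂ 2 μ →ₗᵢ⋆[ℂ] Lp ℂ 2 μ where
  toFun f := (memLp_twistedConj he he_inv hρm hρ (Lp.memLp f)).toLp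
  map_add' f g := by
    rw [← MemLp.toLp_add]
    refine MemLp.toLp_congr _ _ ?_
    rw [← twistedConj_add]
    exact twistedConj_congr_ae he (Lp.coeFn_add f g)
  map_smul' c f := by
    rw [← MemLp.toLp_const_smul]
    refine MemLp.toLp_congr _ _ ?_
    rw [← twistedConj_smul]
    exact twistedConj_congr_ae he (Lp.coeFn_smul c f)
  norm_map' f := by
    rw [LinearMap.coe_mk, AddHom.coe_mk, Lp.norm_toLp,
      eLpNorm_twistedConj he he_inv hρ (Lp.aestronglyMeasurable f), Lp.norm_def]

lemma coeFn_twistedConjLp (f : Lp ℂ 2 μ) :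
    twistedConjLp he he_inv hρm hρ f =ᵐ[μ] twistedConj μ e ρ f :=
  MemLp.coeFn_toLp (memLp_twistedConj he he_inv hρm hρ (Lp.memLp f))

lemma twistedConjLp_twistedConjLp (hρ_inv : ∀ᵐ x ∂μ, ρ x * conj (ρ (e x)) = 1)
    (f : Lp ℂ 2 μ) : twistedConjLp he he_inv hρm hρ (twistedConjLp he he_inv hρm hρ f) = f := by
  refine Lp.ext ((coeFn_twistedConjLp he he_inv hρm hρ _).trans ?_)
  exact (twistedConj_congr_ae he (coeFn_twistedConjLp he he_inv hρm hρ f)).trans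
    (twistedConj_twistedConj he he_inv hρ_inv _)

lemma twistedConjLp_comm {W : Lp ℂ 2 μ → Lp ℂ 2 μ} {w : (α → ℂ) → α → ℂ}
    (hW : ∀ f, W f =ᵐ[μ] w f) (hw : ∀ g₁ g₂, g₁ =ᵐ[μ] g₂ → w g₁ =ᵐ[μ] w g₂)
    (hTw : ∀ g, twistedConj μ e ρ (w g) =ᵐ[μ] w (twistedConj μ e ρ g)) (f : Lp ℂ 2 μ) :
    twistedConjLp he he_inv hρm hρ (W f) = W (twistedConjLp he he_inv hρm hρ f) := by
  refine Lp.ext ?_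
  calc (twistedConjLp he he_inv hρm hρ (W f) : α → ℂ)
      =ᵐ[μ] twistedConj μ e ρ (W f) := coeFn_twistedConjLp he he_inv hρm hρ _
    _ =ᵐ[μ] twistedConj μ e ρ (w f) := twistedConj_congr_ae he (hW f)
    _ =ᵐ[μ] w (twistedConj μ e ρ f) := hTw f
    _ =ᵐ[μ] w (twistedConjLp he he_inv hρm hρ f) :=
      hw _ _ (coeFn_twistedConjLp he he_inv hρm hρ f).symm
    _ =ᵐ[μ] W (twistedConjLp he he_inv hρm hρ f) := (hW _).symm

end Lp

end Involution

lemma ZMod.two_eq_zero_or_one (a : ZMod 2) : a = 0 ∨ a = 1 := by revert a; decide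

lemma neg_one_pow_val_one_sub (a : ZMod 2) : (-1 : ℂ) ^ (1 - a).val = -(-1) ^ a.val := by
  obtain rfl | rfl := ZMod.two_eq_zero_or_one a <;> simp [ZMod.val_one]

lemma gwFlip_involutive : Function.Involutive gwFlip := fun x => funext fun i => by
  simp [gwFlip]

lemma measurable_gwFlip : Measurable gwFlip := by
  unfold gwFlip
  fun_prop

lemma gwDelta_add_self (k : ℕ) : gwDelta k + gwDelta k = 0 := by
  ext i
  exact CharTwo.add_self_eq_zero _

lemma add_gwDelta_involutive (k : ℕ) : Function.Involutive (· + gwDelta k) := fun x => by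
  simp only [add_assoc, gwDelta_add_self, add_zero]

lemma gwFlip_comp_add_gwDelta (k : ℕ) :
    gwFlip ∘ (· + gwDelta k) = (· + gwDelta k) ∘ gwFlip := by
  ext x i
  simp only [Function.comp_apply, gwFlip, Pi.add_apply, CharTwo.sub_eq_add]
  ring

lemma gwSign_eq_neg_prod (k : ℕ) (x : GWX) :
    gwSign k x = -∏ i ∈ Finset.range k, (-1 : ℂ) ^ (x i).val := by
  rw [gwSign, pow_succ, Finset.prod_pow_eq_pow_sum, mul_neg_one]

lemma gwSign_gwFlip (k : ℕ) (x : GWX) : gwSign k (gwFlip x) = (-1) ^ k * gwSign k x := by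
  simp only [gwSign_eq_neg_prod, gwFlip, neg_one_pow_val_one_sub, Finset.prod_neg,
    Finset.card_range, mul_neg]

lemma conj_neg_one_pow_gwFlip_mul_I (k : ℕ) (x : GWX) :
    conj ((-1 : ℂ) ^ (gwFlip x k).val * I) = (-1) ^ (x k).val * I := by
  rw [gwFlip, neg_one_pow_val_one_sub, map_mul, conj_I, map_neg, map_pow, map_neg, map_one]
  ring

lemma conj_gwSign (k : ℕ) (x : GWX) : conj (gwSign k x) = gwSign k x := by
  simp [gwSign]

lemma mul_conj_gwSign_mul_I_gwFlip {ρ c : GWX → ℂ} {k : ℕ} {x : GWX}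
    (h : ρ x * conj (c (gwFlip x)) = (-1) ^ (k + 1) * c x * ρ (x + gwDelta k)) :
    ρ x * conj (gwSign k (gwFlip x) * I * c (gwFlip x)) =
      gwSign k x * I * c x * ρ (x + gwDelta k) := by
  have hk : (-1 : ℂ) ^ k * (-1) ^ k = 1 := by rw [← mul_pow]; norm_num
  rw [map_mul, map_mul, conj_I, conj_gwSign, gwSign_gwFlip]
  linear_combination (-(-1) ^ k * gwSign k x * I) * h +
    gwSign k x * I * c x * ρ (x + gwDelta k) * hk

variable (μ : Measure GWX) (c : ℕ → GWX → ℂ) in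
def gwJFun (k : ℕ) : (GWX → ℂ) → GWX → ℂ :=
  weightedComp μ (· + gwDelta k) fun x => gwSign k x * I * c k x

variable (μ : Measure GWX) (c : ℕ → GWX → ℂ) in
def gwJ'Fun (k : ℕ) (g : GWX → ℂ) (x : GWX) : ℂ :=
  (-1) ^ (x k).val * I * gwJFun μ c k g x

section GWOperators

variable {μ : Measure GWX} [SigmaFinite μ] {c : ℕ → GWX → ℂ} {ρ : GWX → ℂ} {k : ℕ}
  (hF : QuasiMeasurePreserving gwFlip μ μ)
  (hT : QuasiMeasurePreserving (· + gwDelta k) μ μ)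
  (hρc : ∀ᵐ x ∂μ, ρ x * conj (c k (gwFlip x)) = (-1) ^ (k + 1) * c k x * ρ (x + gwDelta k))
include hF hT hρc

lemma twistedConj_gwJFun (g : GWX → ℂ) :
    twistedConj μ gwFlip ρ (gwJFun μ c k g) =ᵐ[μ] gwJFun μ c k (twistedConj μ gwFlip ρ g) :=
  twistedConj_weightedComp hF gwFlip_involutive hT (add_gwDelta_involutive k)
    (gwFlip_comp_add_gwDelta k) (hρc.mono fun _ => mul_conj_gwSign_mul_I_gwFlip) g

lemma twistedConj_gwJ'Fun (g : GWX → ℂ) :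
    twistedConj μ gwFlip ρ (gwJ'Fun μ c k g) =ᵐ[μ] gwJ'Fun μ c k (twistedConj μ gwFlip ρ g) := by
  unfold gwJ'Fun
  rw [twistedConj_mul_left]
  filter_upwards [twistedConj_gwJFun hF hT hρc g] with x hx
  rw [conj_neg_one_pow_gwFlip_mul_I, hx]

end GWOperators

theorem gw_real_structure_of_rho_general
    (μ : Measure GWX) [SigmaFinite μ]
    (hq : ∀ k : ℕ, μ.map (· + gwDelta k) ≪ μ ∧ μ ≪ μ.map (· + gwDelta k))
    (c : ℕ → GWX → ℂ)
    (J J' : ℕ → Lp ℂ 2 μ → Lp ℂ 2 μ)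
    (hJ : ∀ k f, (↑(J k f) : GWX → ℂ) =ᵐ[μ] fun x =>
      gwSign k x * Complex.I * c k x *
        (Real.sqrt (((μ.map (· + gwDelta k)).rnDeriv μ x).toReal) : ℂ) *
        (↑f : GWX → ℂ) (x + gwDelta k))
    (hJ' : ∀ k f, (↑(J' k f) : GWX → ℂ) =ᵐ[μ] fun x =>
      (-1 : ℂ) ^ (x k).val * Complex.I * (↑(J k f) : GWX → ℂ) x)
    (hflip : μ.map gwFlip ≪ μ ∧ μ ≪ μ.map gwFlip)
    (ρ : GWX → ℂ)
    (hρm : Measurable ρ)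
    (hρ1 : ∀ᵐ x ∂μ, ‖ρ x‖ = 1)
    (hρ2 : ∀ᵐ x ∂μ, ρ x * (starRingEnd ℂ) (ρ (gwFlip x)) = 1)
    (hρ3 : ∀ k : ℕ, ∀ᵐ x ∂μ,
      ρ x * (starRingEnd ℂ) (c k (gwFlip x)) =
        (-1 : ℂ) ^ (k + 1) * c k x * ρ (x + gwDelta k)) :
    ∃ S : Lp ℂ 2 μ → Lp ℂ 2 μ,
      (∀ f, (↑(S f) : GWX → ℂ) =ᵐ[μ] fun x =>
        ρ x * (Real.sqrt (((μ.map gwFlip).rnDeriv μ x).toReal) : ℂ) *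
          (starRingEnd ℂ) ((↑f : GWX → ℂ) (gwFlip x))) ∧
      (∀ f, ‖S f‖ = ‖f‖) ∧
      (∀ f g, S (f + g) = S f + S g) ∧
      (∀ (α : ℂ) (f : Lp ℂ 2 μ), S (α • f) = (starRingEnd ℂ) α • S f) ∧
      (∀ f, S (S f) = f) ∧
      (∀ k f, S (J k f) = J k (S f)) ∧
      (∀ k f, S (J' k f) = J' k (S f)) := by
  have hF : QuasiMeasurePreserving gwFlip μ μ := ⟨measurable_gwFlip, hflip.1⟩
  have hT k : QuasiMeasurePreserving (· + gwDelta k) μ μ := ⟨by fun_prop, (hq k).1⟩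
  have hJ'_eq k f : J' k f =ᵐ[μ] gwJ'Fun μ c k f := (hJ' k f).trans (EventuallyEq.rfl.mul (hJ k f))
  refine ⟨twistedConjLp hF gwFlip_involutive hρm.aestronglyMeasurable hρ1,
    coeFn_twistedConjLp _ _ _ _, LinearIsometry.norm_map _, map_add _, LinearIsometry.map_smulₛₗ _,
    twistedConjLp_twistedConjLp _ _ _ _ hρ2, fun k => ?_, fun k => ?_⟩
  · exact twistedConjLp_comm _ _ _ _ (hJ k) (fun _ _ => weightedComp_congr_ae (hT k))
      (twistedConj_gwJFun hF (hT k) (hρ3 k))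
  · exact twistedConjLp_comm _ _ _ _ (hJ'_eq k)
      (fun _ _ h => EventuallyEq.rfl.mul (weightedComp_congr_ae (hT k) h))
      (twistedConj_gwJ'Fun hF (hT k) (hρ3 k))

/-- given scalar Gårding–Wightman data `(μ, (c_k))` with associated operators
`J_k, J'_k` on `L²(X, μ; ℂ)`, if `μ̃ = (x ↦ 1-x)_* μ` is mutually absolutely continuous with
`μ` and there is a measurable unimodular `ρ` with `ρ(x) conj(ρ(1-x)) = 1` and
`ρ(x) conj(c_k(1-x)) = (-1)^k c_k(x) ρ(x + δ_k)` a.e. (paper's `k ≥ 1`; here `(-1)^(k+1)`),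
then `(S f)(x) = ρ(x) √((dμ̃/dμ)(x)) conj(f(1-x))` defines a norm-preserving, additive,
conjugate-homogeneous involution of `L²(X, μ; ℂ)` commuting with every `J_k` and `J'_k`. -/
theorem gw_real_structure_of_rho
    (μ : Measure GWX) [SigmaFinite μ]
    (hq : ∀ k : ℕ, μ.map (· + gwDelta k) ≪ μ ∧ μ ≪ μ.map (· + gwDelta k))
    (c : ℕ → GWX → ℂ)
    (hcm : ∀ k, Measurable (c k))
    (hc1 : ∀ k, ∀ᵐ x ∂μ, ‖c k x‖ = 1)
    (hc2 : ∀ k, ∀ᵐ x ∂μ, (starRingEnd ℂ) (c k x) = c k (x + gwDelta k))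
    (hc3 : ∀ k l, ∀ᵐ x ∂μ, c k x * c l (x + gwDelta k) = c l x * c k (x + gwDelta l))
    (J J' : ℕ → Lp ℂ 2 μ → Lp ℂ 2 μ)
    (hJ : ∀ k f, (↑(J k f) : GWX → ℂ) =ᵐ[μ] fun x =>
      gwSign k x * Complex.I * c k x *
        (Real.sqrt (((μ.map (· + gwDelta k)).rnDeriv μ x).toReal) : ℂ) *
        (↑f : GWX → ℂ) (x + gwDelta k))
    (hJ' : ∀ k f, (↑(J' k f) : GWX → ℂ) =ᵐ[μ] fun x =>
      (-1 : ℂ) ^ (x k).val * Complex.I * (↑(J k f) : GWX → ℂ) x)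
    (hflip : μ.map gwFlip ≪ μ ∧ μ ≪ μ.map gwFlip)
    (ρ : GWX → ℂ)
    (hρm : Measurable ρ)
    (hρ1 : ∀ᵐ x ∂μ, ‖ρ x‖ = 1)
    (hρ2 : ∀ᵐ x ∂μ, ρ x * (starRingEnd ℂ) (ρ (gwFlip x)) = 1)
    (hρ3 : ∀ k : ℕ, ∀ᵐ x ∂μ,
      ρ x * (starRingEnd ℂ) (c k (gwFlip x)) =
        (-1 : ℂ) ^ (k + 1) * c k x * ρ (x + gwDelta k)) :
    ∃ S : Lp ℂ 2 μ → Lp ℂ 2 μ,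
      (∀ f, (↑(S f) : GWX → ℂ) =ᵐ[μ] fun x =>
        ρ x * (Real.sqrt (((μ.map gwFlip).rnDeriv μ x).toReal) : ℂ) *
          (starRingEnd ℂ) ((↑f : GWX → ℂ) (gwFlip x))) ∧
      (∀ f, ‖S f‖ = ‖f‖) ∧
      (∀ f g, S (f + g) = S f + S g) ∧
      (∀ (α : ℂ) (f : Lp ℂ 2 μ), S (α • f) = (starRingEnd ℂ) α • S f) ∧
      (∀ f, S (S f) = f) ∧
      (∀ k f, S (J k f) = J k (S f)) ∧
      (∀ k f, S (J' k f) = J' k (S f)) :=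
  gw_real_structure_of_rho_general μ hq c J J' hJ hJ' hflip ρ hρm hρ1 hρ2 hρ3
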